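/- Let Δ be an n×n real matrix with Δ_ij ≠ 0 for all i,j, and let S = Sign(Δ). Let σ ≠ τ be permutations of {1,…,n} with corresponding permutation matrices P and Q, and suppose P · S · Qᵀ ≠ S (i.e., there is some pair (i,j) with S(σ(i),τ(j)) ≠ S(i,j)). Then the CA expected payment of the asymmetric permutation profile (σ,τ) is strictly less than truthful: Σ_{i,j} Δ_ij · S(σ(i), τ(j)) < Σ_{i,j} Δ_ij · S(i,j). Hence, when Δ has no zero entries, an asymmetric permutation profile matches the truthful payment if and only if the signal distribution has paired permutations. -/
import Mathlib


/-- The permutation matrix of `σ`: entry `(i,j)` is `1` iff `j = σ i`.  With this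
convention, for deterministic strategies `F, G`, the `(i,j)` entry of `F · S · Gᵀ` is
`S (F i) (G j)`. -/
noncomputable def permMat {n : ℕ} (σ : Equiv.Perm (Fin n)) : Matrix (Fin n) (Fin n) ℝ :=
  Matrix.of fun i j => if j = σ i then (1 : ℝ) else 0

/-- `Sign(Δ)`: the 0/1 matrix with entry `1` where `Δ` is strictly positive. -/
noncomputable def signM {n : ℕ} (Δ : Matrix (Fin n) (Fin n) ℝ) : Matrix (Fin n) (Fin n) ℝ :=
  Matrix.of fun i j => if 0 < Δ i j then (1 : ℝ) else 0

lemma permMat_mul_entry {n : ℕ} (σ τ : Equiv.Perm (Fin n)) (S : Matrix (Fin n) (Fin n) ℝ)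
    (i j : Fin n) :
    (permMat σ * S * (permMat τ).transpose) i j = S (σ i) (τ j) := by
  simp only [Matrix.mul_apply, permMat, Matrix.transpose_apply, Matrix.of_apply]
  rw [Finset.sum_eq_single (τ j)]
  · rw [if_pos rfl, mul_one, Finset.sum_eq_single (σ i)]
    · simp
    · intro b _ hb; simp [hb]
    · simp
  · intro b _ hb; simp [hb]
  · simp

/-- If `Δ` has no zero entries and `σ ≠ τ` are permutations whose
permutation matrices `P, Q` satisfy `P · S · Qᵀ ≠ S` for `S = Sign(Δ)` (i.e. the pair
is *not* a paired permutation for `S`), then the asymmetric permutation profile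
`(σ, τ)` earns strictly less CA expected payment than truthful reporting. -/
theorem ca_unpaired_permutations_strictly_worse (n : ℕ) (Δ : Matrix (Fin n) (Fin n) ℝ)
    (hΔ : ∀ i j, Δ i j ≠ 0)
    (σ τ : Equiv.Perm (Fin n)) (hne : σ ≠ τ)
    (hS : permMat σ * signM Δ * (permMat τ).transpose ≠ signM Δ) :
    (∑ i, ∑ j, Δ i j * signM Δ (σ i) (τ j)) < ∑ i, ∑ j, Δ i j * signM Δ i j := by
  -- extract a witness where entries differ
  obtain ⟨i₀, j₀, hdiff⟩ : ∃ i j, signM Δ (σ i) (τ j) ≠ signM Δ i j := by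
    by_contra h
    push_neg at h
    apply hS
    ext i j
    rw [permMat_mul_entry]
    exact h i j
  have key : ∀ i j, Δ i j * signM Δ (σ i) (τ j) ≤ Δ i j * signM Δ i j := by
    intro i j
    simp only [signM, Matrix.of_apply]
    have h0 : Δ i j < 0 ∨ 0 < Δ i j := (hΔ i j).lt_or_gt
    split_ifs with h1 h2 h2 <;> rcases h0 with h | h <;> nlinarith
  have keystrict : Δ i₀ j₀ * signM Δ (σ i₀) (τ j₀) < Δ i₀ j₀ * signM Δ i₀ j₀ := by
    simp only [signM, Matrix.of_apply] at hdiff ⊢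
    have h0 : Δ i₀ j₀ < 0 ∨ 0 < Δ i₀ j₀ := (hΔ i₀ j₀).lt_or_gt
    split_ifs at hdiff ⊢ with h1 h2 h2
    · exact absurd rfl hdiff
    · rcases h0 with h | h
      · nlinarith
      · exact absurd h h2
    · rcases h0 with h | h
      · exact absurd h (asymm h2)
      · nlinarith
    · exact absurd rfl hdiff
  refine Finset.sum_lt_sum (fun i _ => Finset.sum_le_sum fun j _ => key i j) ⟨i₀, Finset.mem_univ _, ?_⟩
  exact Finset.sum_lt_sum (fun j _ => key i₀ j) ⟨j₀, Finset.mem_univ _, keystrict⟩
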